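/- arXiv:1903.06286 — 7 statements merged into one kernel-verified Lean document; each statement's English description precedes it below -/
import Mathlib

section
/- Let (α̂, τ̂′, β̂′) ∈ ℝ³ be a global minimizer over (a, c, b) ∈ ℝ³ of the least-squares objective Σ_{i=1}^{n} (y'_i − a − c·g_i − b·y_i)², fitted on all units. Then τ̂′ = (Ȳ_{1,t+1} − Ȳ_{0,t+1}) − β̂′·(Ȳ_{1,t} − Ȳ_{0,t}). -/
/-!
At a least-squares minimizer the residual `r` is orthogonal to every regressor; the normal
equations for the intercept and the treatment dummy say that `r` sums to zero over the treated
units and over the control units. Dividing by the group sizes gives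
`Ȳ₁,ₜ₊₁ - α̂ - τ̂′ - β̂′ Ȳ₁,ₜ = 0` and `Ȳ₀,ₜ₊₁ - α̂ - β̂′ Ȳ₀,ₜ = 0`, and subtracting eliminates `α̂`.
-/

open Finset

section

variable {ι : Type*} [Fintype ι]

lemma sum_mul_eq_zero_of_forall_sum_sq_le (r v : ι → ℝ)
    (h : ∀ t : ℝ, ∑ i, r i ^ 2 ≤ ∑ i, (r i - t * v i) ^ 2) :
    ∑ i, r i * v i = 0 := by
  have hquad : ∀ t : ℝ,
      0 ≤ (∑ i, v i ^ 2) * (t * t) + (-2 * ∑ i, r i * v i) * t + 0 := by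
    intro t
    have hexp : ∑ i, (r i - t * v i) ^ 2
        = ∑ i, r i ^ 2 + ((∑ i, v i ^ 2) * (t * t) + (-2 * ∑ i, r i * v i) * t + 0) := by
      simp only [mul_sum, sum_mul, ← sum_add_distrib, add_zero]
      exact sum_congr rfl fun i _ => by ring
    linarith [h t]
  -- a quadratic `Q t² - 2 L t` that is nonnegative everywhere has discriminant `4 L² ≤ 0`
  have hdiscrim := discrim_le_zero hquad
  rw [discrim] at hdiscrim
  nlinarith [sq_nonneg (∑ i, r i * v i)]

lemma sum_filter_eq_one_eq_sum_mul {g : ι → ℝ} (hg : ∀ i, g i = 0 ∨ g i = 1) (f : ι → ℝ) :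
    ∑ i ∈ univ.filter (fun i => g i = 1), f i = ∑ i, f i * g i := by
  rw [sum_filter]
  exact sum_congr rfl fun i _ => by rcases hg i with h | h <;> simp [h]

lemma sum_filter_eq_zero_eq_sum_mul_one_sub {g : ι → ℝ} (hg : ∀ i, g i = 0 ∨ g i = 1)
    (f : ι → ℝ) :
    ∑ i ∈ univ.filter (fun i => g i = 0), f i = ∑ i, f i * (1 - g i) := by
  rw [sum_filter]
  exact sum_congr rfl fun i _ => by rcases hg i with h | h <;> simp [h]

end

lemma mean_sub_mul_mean_eq_of_sum_eq_zero {ι : Type*} {s : Finset ι} (hs : s.Nonempty)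
    {z x : ι → ℝ} {c b : ℝ} (h : ∑ i ∈ s, (z i - c - b * x i) = 0) :
    (∑ i ∈ s, z i) / #s - b * ((∑ i ∈ s, x i) / #s) = c := by
  have hcard : (#s : ℝ) ≠ 0 := by exact_mod_cast hs.card_pos.ne'
  simp only [sum_sub_distrib, sum_const, nsmul_eq_mul, ← mul_sum] at h
  field_simp
  linarith

/-- Proposition 1 (second estimator): if `(α̂, τ̂′, β̂′)` globally minimizes the
least-squares objective `∑_i (y'ᵢ − a − c·gᵢ − b·yᵢ)²` over all units, then
`τ̂′ = (Ȳ₁ₜ₊₁ − Ȳ₀ₜ₊₁) − β̂′ (Ȳ₁ₜ − Ȳ₀ₜ)`. -/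
theorem ldv_full_fit_estimator {n : ℕ} (g : Fin n → ℝ) (hg : ∀ i, g i = 0 ∨ g i = 1)
    (h1 : ∃ i, g i = 1) (h0 : ∃ i, g i = 0)
    (y y' : Fin n → ℝ) (αhat τhat βhat : ℝ)
    (hmin : ∀ a c b : ℝ,
      ∑ i, (y' i - αhat - τhat * g i - βhat * y i) ^ 2 ≤
        ∑ i, (y' i - a - c * g i - b * y i) ^ 2)
    (Y1t Y1t1 Y0t Y0t1 : ℝ)
    (hY1t : Y1t = (∑ i ∈ Finset.univ.filter (fun i => g i = 1), y i) /
      (Finset.univ.filter (fun i => g i = 1)).card)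
    (hY1t1 : Y1t1 = (∑ i ∈ Finset.univ.filter (fun i => g i = 1), y' i) /
      (Finset.univ.filter (fun i => g i = 1)).card)
    (hY0t : Y0t = (∑ i ∈ Finset.univ.filter (fun i => g i = 0), y i) /
      (Finset.univ.filter (fun i => g i = 0)).card)
    (hY0t1 : Y0t1 = (∑ i ∈ Finset.univ.filter (fun i => g i = 0), y' i) /
      (Finset.univ.filter (fun i => g i = 0)).card) :
    τhat = (Y1t1 - Y0t1) - βhat * (Y1t - Y0t) := by
  set r : Fin n → ℝ := fun i => y' i - αhat - τhat * g i - βhat * y i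
  have hintercept : ∑ i, r i = 0 := by
    simpa using sum_mul_eq_zero_of_forall_sum_sq_le r (fun _ => 1) fun t =>
      (hmin (αhat + t) τhat βhat).trans_eq (sum_congr rfl fun i _ => by simp only [r]; ring)
  have htreatment : ∑ i, r i * g i = 0 :=
    sum_mul_eq_zero_of_forall_sum_sq_le r g fun t =>
      (hmin αhat (τhat + t) βhat).trans_eq (sum_congr rfl fun i _ => by simp only [r]; ring)
  have htreated : ∑ i ∈ univ.filter (fun i => g i = 1),
      (y' i - (αhat + τhat) - βhat * y i) = 0 :=
    calc _ = ∑ i ∈ univ.filter (fun i => g i = 1), r i :=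
          sum_congr rfl fun i hi => by simp only [r, (mem_filter.mp hi).2]; ring
      _ = 0 := by rw [sum_filter_eq_one_eq_sum_mul hg, htreatment]
  have hcontrol : ∑ i ∈ univ.filter (fun i => g i = 0), (y' i - αhat - βhat * y i) = 0 :=
    calc _ = ∑ i ∈ univ.filter (fun i => g i = 0), r i :=
          sum_congr rfl fun i hi => by simp only [r, (mem_filter.mp hi).2]; ring
      _ = 0 := by
        rw [sum_filter_eq_zero_eq_sum_mul_one_sub hg]
        simp only [mul_one_sub, sum_sub_distrib, hintercept, htreatment, sub_zero]
  obtain ⟨i₁, hi₁⟩ := h1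
  obtain ⟨i₀, hi₀⟩ := h0
  have hmean₁ := mean_sub_mul_mean_eq_of_sum_eq_zero ⟨i₁, by simpa using hi₁⟩ htreated
  have hmean₀ := mean_sub_mul_mean_eq_of_sum_eq_zero ⟨i₀, by simpa using hi₀⟩ hcontrol
  rw [hY1t, hY1t1, hY0t, hY0t1]
  linarith
end

section
/- Let (α̂, β̂) ∈ ℝ² be a global minimizer over (a, b) ∈ ℝ² of the least-squares objective Σ_{i ∈ I₀} (y'_i − a − b·y_i)² fitted on the control-group data, and define τ̂_LDV := Ȳ_{1,t+1} − (α̂ + β̂·Ȳ_{1,t}) and τ̂_DID := (Ȳ_{1,t+1} − Ȳ_{0,t+1}) − (Ȳ_{1,t} − Ȳ_{0,t}). If β̂ < 1, then: (i) if Ȳ_{1,t} < Ȳ_{0,t} then τ̂_DID > τ̂_LDV; (ii) if Ȳ_{1,t} > Ȳ_{0,t} then τ̂_DID < τ̂_LDV; and (iii) if β̂ = 1 (instead of β̂ < 1) then τ̂_DID = τ̂_LDV. -/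
/-!
The control-group regression line passes through the control-group means, since the least-squares
residuals sum to zero. Hence `Ȳ₀,ₜ₊₁ = α̂ + β̂ Ȳ₀,ₜ`, and substituting this into `τ̂_DID` gives
`τ̂_DID − τ̂_LDV = (β̂ − 1)(Ȳ₁,ₜ − Ȳ₀,ₜ)`, whose sign is read off from those of the two factors.
-/

open Finset

theorem Finset.sum_eq_zero_of_forall_sum_sq_le_sum_sub_sq {ι : Type*} (s : Finset ι)
    (e : ι → ℝ) (h : ∀ a : ℝ, ∑ i ∈ s, e i ^ 2 ≤ ∑ i ∈ s, (e i - a) ^ 2) :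
    ∑ i ∈ s, e i = 0 := by
  set S := ∑ i ∈ s, e i
  set n : ℝ := (s.card : ℝ)
  have hn : 0 ≤ n := Nat.cast_nonneg _
  -- shifting by `t S` with `t = 1 / (n + 1)` changes the sum of squares by `S² t (n t − 2) < 0`
  set t := 1 / (n + 1)
  have ht : t * (n + 1) = 1 := one_div_mul_cancel (by positivity)
  have ht_pos : 0 < t := by positivity
  have hshift : ∑ i ∈ s, (e i - t * S) ^ 2 = ∑ i ∈ s, e i ^ 2 + S ^ 2 * (t * (n * t - 2)) := by
    simp only [sub_sq, sum_add_distrib, sum_sub_distrib, ← sum_mul, ← mul_sum, sum_const,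
      nsmul_eq_mul]
    ring
  have hneg : t * (n * t - 2) < 0 := mul_neg_of_pos_of_neg ht_pos (by nlinarith)
  have hgain : S ^ 2 * (t * (n * t - 2)) ≥ 0 := by linarith [h (t * S)]
  exact pow_eq_zero_iff two_ne_zero |>.mp
    (le_antisymm (nonpos_of_mul_nonneg_left hgain hneg) (sq_nonneg S))

section LeastSquares

variable {ι : Type*} (s : Finset ι) (x y : ι → ℝ) {α β : ℝ}

theorem sum_leastSquares_residuals_eq_zero
    (hmin : ∀ a b : ℝ, ∑ i ∈ s, (y i - α - β * x i) ^ 2 ≤ ∑ i ∈ s, (y i - a - b * x i) ^ 2) :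
    ∑ i ∈ s, (y i - α - β * x i) = 0 :=
  s.sum_eq_zero_of_forall_sum_sq_le_sum_sub_sq _ fun a =>
    (hmin (α + a) β).trans_eq <| sum_congr rfl fun _ _ => by ring

theorem mean_eq_leastSquares_line_mean (hs : s.Nonempty)
    (hmin : ∀ a b : ℝ, ∑ i ∈ s, (y i - α - β * x i) ^ 2 ≤ ∑ i ∈ s, (y i - a - b * x i) ^ 2) :
    (∑ i ∈ s, y i) / s.card = α + β * ((∑ i ∈ s, x i) / s.card) := by
  have hcard : (s.card : ℝ) ≠ 0 := Nat.cast_ne_zero.mpr hs.card_pos.ne'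
  have hsum := sum_leastSquares_residuals_eq_zero s x y hmin
  simp only [sum_sub_distrib, sum_const, nsmul_eq_mul, ← mul_sum] at hsum
  field_simp
  linarith

end LeastSquares

theorem bracketing_sample_general {ι : Type*} (I₀ : Finset ι)
    (hI₀ : I₀.Nonempty)
    (y y' : ι → ℝ) (αhat βhat : ℝ)
    (hmin : ∀ a b : ℝ,
      ∑ i ∈ I₀, (y' i - αhat - βhat * y i) ^ 2 ≤ ∑ i ∈ I₀, (y' i - a - b * y i) ^ 2)
    (Y1t Y1t1 Y0t Y0t1 τLDV τDID : ℝ)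
    (hY0t : Y0t = (∑ i ∈ I₀, y i) / I₀.card)
    (hY0t1 : Y0t1 = (∑ i ∈ I₀, y' i) / I₀.card)
    (hLDV : τLDV = Y1t1 - (αhat + βhat * Y1t))
    (hDID : τDID = (Y1t1 - Y0t1) - (Y1t - Y0t)) :
    (βhat < 1 → Y1t < Y0t → τDID > τLDV) ∧
    (βhat < 1 → Y1t > Y0t → τDID < τLDV) ∧
    (βhat = 1 → τDID = τLDV) := by
  have hline : Y0t1 = αhat + βhat * Y0t := by
    rw [hY0t1, hY0t]
    exact mean_eq_leastSquares_line_mean I₀ y y' hI₀ hmin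
  have hdiff : τDID - τLDV = (βhat - 1) * (Y1t - Y0t) := by
    rw [hDID, hLDV, hline]
    ring
  refine ⟨fun hβ hY => ?_, fun hβ hY => ?_, fun hβ => ?_⟩
  · nlinarith [mul_pos_of_neg_of_neg (sub_neg.mpr hβ) (sub_neg.mpr hY)]
  · nlinarith [mul_neg_of_neg_of_pos (sub_neg.mpr hβ) (sub_pos.mpr hY)]
  · simpa [hβ, sub_eq_zero] using hdiff

/-- Sample-level bracketing: with `(α̂, β̂)` the OLS fit on the control group,
`τ̂_LDV = Ȳ₁ₜ₊₁ − (α̂ + β̂ Ȳ₁ₜ)` and `τ̂_DID = (Ȳ₁ₜ₊₁ − Ȳ₀ₜ₊₁) − (Ȳ₁ₜ − Ȳ₀ₜ)`: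
if `β̂ < 1` and `Ȳ₁ₜ < Ȳ₀ₜ` then `τ̂_DID > τ̂_LDV`; if `β̂ < 1` and `Ȳ₁ₜ > Ȳ₀ₜ`
then `τ̂_DID < τ̂_LDV`; and if `β̂ = 1` then `τ̂_DID = τ̂_LDV`. -/
theorem bracketing_sample {ι : Type*} (I₀ I₁ : Finset ι)
    (hI₀ : I₀.Nonempty) (hI₁ : I₁.Nonempty)
    (y y' : ι → ℝ) (αhat βhat : ℝ)
    (hmin : ∀ a b : ℝ,
      ∑ i ∈ I₀, (y' i - αhat - βhat * y i) ^ 2 ≤ ∑ i ∈ I₀, (y' i - a - b * y i) ^ 2)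
    (Y1t Y1t1 Y0t Y0t1 τLDV τDID : ℝ)
    (hY1t : Y1t = (∑ i ∈ I₁, y i) / I₁.card)
    (hY1t1 : Y1t1 = (∑ i ∈ I₁, y' i) / I₁.card)
    (hY0t : Y0t = (∑ i ∈ I₀, y i) / I₀.card)
    (hY0t1 : Y0t1 = (∑ i ∈ I₀, y' i) / I₀.card)
    (hLDV : τLDV = Y1t1 - (αhat + βhat * Y1t))
    (hDID : τDID = (Y1t1 - Y0t1) - (Y1t - Y0t)) :
    (βhat < 1 → Y1t < Y0t → τDID > τLDV) ∧
    (βhat < 1 → Y1t > Y0t → τDID < τLDV) ∧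
    (βhat = 1 → τDID = τLDV) :=
  bracketing_sample_general I₀ hI₀ y y' αhat βhat hmin Y1t Y1t1 Y0t Y0t1 τLDV τDID hY0t hY0t1 hLDV
    hDID
end

section
/- Suppose m is differentiable with derivative m′(y) < 1 for all y ∈ ℝ (Stationarity), and ν₁((−∞, y]) ≥ ν₀((−∞, y]) for all y ∈ ℝ (Stochastic Monotonicity, version (a)). Then μ_DID ≤ μ_LDV; consequently, for any real number μ₁ (the mean treated outcome E(Y_{t+1} | G = 1)), the estimands τ_DID := μ₁ − μ_DID and τ_LDV := μ₁ − μ_LDV satisfy τ_DID ≥ τ_LDV. -/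
/-!
Stationarity makes `Δ = m - id` antitone, and `μ_LDV - μ_DID = ∫ Δ ∂ν₁ - ∫ Δ ∂ν₀`. The CDF
condition says that `ν₁` is stochastically smaller than `ν₀`: it gives at least as much mass to
every lower set of `ℝ` (an increasing union of half-lines `Iic x`, indexed by a space whose
`atTop` filter is countably generated) and, having the same total mass, at most as much to every
upper set. The superlevel sets of `Δ⁺` are lower sets and those of `Δ⁻` are upper sets, so the
layer-cake formula gives `∫ Δ⁺ ∂ν₀ ≤ ∫ Δ⁺ ∂ν₁` and `∫ Δ⁻ ∂ν₁ ≤ ∫ Δ⁻ ∂ν₀`.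
-/

open MeasureTheory Set

lemma IsLowerSet.iUnion_Iic {α : Type*} [Preorder α] {s : Set α} (hs : IsLowerSet s) :
    ⋃ x : s, Iic (x : α) = s :=
  Subset.antisymm (iUnion_subset fun x _ hy => hs hy x.2)
    fun x hx => mem_iUnion.2 ⟨⟨x, hx⟩, le_rfl⟩

lemma lintegral_ofReal_le_of_measure_lt_le {α : Type*} [MeasurableSpace α] {μ ν : Measure α}
    {f : α → ℝ} (hf : Measurable f) (hle : ∀ t, μ {a | t < f a} ≤ ν {a | t < f a}) :
    ∫⁻ a, ENNReal.ofReal (f a) ∂μ ≤ ∫⁻ a, ENNReal.ofReal (f a) ∂ν := by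
  have hpos : ∀ a, ENNReal.ofReal (f a) = ENNReal.ofReal (max (f a) 0) := by simp
  have hmeas : Measurable fun a => max (f a) 0 := hf.max measurable_const
  have hnn : ∀ μ : Measure α, 0 ≤ᵐ[μ] fun a => max (f a) 0 :=
    fun _ => .of_forall fun _ => le_max_right _ _
  simp_rw [hpos]
  rw [lintegral_eq_lintegral_meas_lt μ (hnn μ) hmeas.aemeasurable,
    lintegral_eq_lintegral_meas_lt ν (hnn ν) hmeas.aemeasurable]
  refine setLIntegral_mono' measurableSet_Ioi fun t (ht : 0 < t) => ?_
  simpa only [lt_max_iff, ht.not_gt, or_false] using hle t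

section StochasticOrder

variable {α : Type*} [TopologicalSpace α] [LinearOrder α] [OrderTopology α]
  [SecondCountableTopology α] [MeasurableSpace α] {ν₀ ν₁ : Measure α}

lemma measure_le_of_isLowerSet (hle : ∀ y, ν₀ (Iic y) ≤ ν₁ (Iic y)) {s : Set α}
    (hs : IsLowerSet s) : ν₀ s ≤ ν₁ s := by
  have := hs.ordConnected
  have hIic : Monotone fun x : s => Iic (x : α) := fun _ _ hxy => Iic_subset_Iic.2 hxy
  rw [← hs.iUnion_Iic, hIic.measure_iUnion, hIic.measure_iUnion]
  exact iSup_mono fun x => hle x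

lemma measure_le_of_isUpperSet [OpensMeasurableSpace α] [IsProbabilityMeasure ν₀]
    [IsProbabilityMeasure ν₁] (hle : ∀ y, ν₀ (Iic y) ≤ ν₁ (Iic y)) {s : Set α}
    (hs : IsUpperSet s) : ν₁ s ≤ ν₀ s := by
  have hsc : MeasurableSet sᶜ := hs.compl.ordConnected.measurableSet
  rw [← compl_compl s, prob_compl_eq_one_sub hsc, prob_compl_eq_one_sub hsc]
  exact tsub_le_tsub_left (measure_le_of_isLowerSet hle hs.compl) 1

lemma integral_le_integral_of_antitone [BorelSpace α] [IsProbabilityMeasure ν₀]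
    [IsProbabilityMeasure ν₁] (hle : ∀ y, ν₀ (Iic y) ≤ ν₁ (Iic y)) {f : α → ℝ} (hf : Antitone f)
    (hf₀ : Integrable f ν₀) (hf₁ : Integrable f ν₁) : ∫ a, f a ∂ν₀ ≤ ∫ a, f a ∂ν₁ := by
  have hpos := lintegral_ofReal_le_of_measure_lt_le hf.measurable fun t =>
    measure_le_of_isLowerSet hle (isLowerSet_setOfPred.2 fun _ _ hab h => h.trans_le (hf hab))
  have hneg := lintegral_ofReal_le_of_measure_lt_le hf.neg.measurable fun t =>
    measure_le_of_isUpperSet hle (isUpperSet_setOfPred.2 fun _ _ hab h => h.trans_le (hf.neg hab))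
  rw [integral_eq_lintegral_pos_part_sub_lintegral_neg_part hf₀,
    integral_eq_lintegral_pos_part_sub_lintegral_neg_part hf₁]
  exact sub_le_sub (ENNReal.toReal_mono hf₁.lintegral_lt_top.ne hpos)
    (ENNReal.toReal_mono hf₀.neg.lintegral_lt_top.ne hneg)

end StochasticOrder

lemma antitone_sub_id_of_deriv_lt_one {m : ℝ → ℝ} (hdiff : Differentiable ℝ m)
    (hderiv : ∀ y, deriv m y < 1) : Antitone fun y => m y - y :=
  antitone_of_deriv_nonpos (hdiff.sub differentiable_id) fun y => by
    rw [deriv_fun_sub (hdiff y) differentiableAt_fun_id, deriv_id'']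
    linarith [hderiv y]

/-- Theorem 1, case (a): under Stationarity (`m` differentiable with `m′ < 1`) and
Stochastic Monotonicity (a) (`ν₁((−∞,y]) ≥ ν₀((−∞,y])`), the counterfactual means
satisfy `μ_DID ≤ μ_LDV`, hence `τ_DID ≥ τ_LDV` for any treated mean `μ₁`. -/
theorem bracketing_nonparametric_a (ν₀ ν₁ : Measure ℝ)
    [IsProbabilityMeasure ν₀] [IsProbabilityMeasure ν₁]
    (m : ℝ → ℝ) (hdiff : Differentiable ℝ m) (hderiv : ∀ y : ℝ, deriv m y < 1)
    (hid₀ : Integrable (fun y : ℝ => y) ν₀) (hid₁ : Integrable (fun y : ℝ => y) ν₁)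
    (hm₀ : Integrable m ν₀) (hm₁ : Integrable m ν₁)
    (hmono : ∀ y : ℝ, ν₀ (Set.Iic y) ≤ ν₁ (Set.Iic y))
    (μDID μLDV : ℝ)
    (hDID : μDID = (∫ y, y ∂ν₁) + (∫ y, m y ∂ν₀) - (∫ y, y ∂ν₀))
    (hLDV : μLDV = ∫ y, m y ∂ν₁) :
    μDID ≤ μLDV ∧ ∀ μ₁ : ℝ, μ₁ - μDID ≥ μ₁ - μLDV := by
  have hΔ := integral_le_integral_of_antitone hmono (antitone_sub_id_of_deriv_lt_one hdiff hderiv)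
    (hm₀.sub hid₀) (hm₁.sub hid₁)
  rw [integral_sub hm₀ hid₀, integral_sub hm₁ hid₁] at hΔ
  subst hDID hLDV
  exact ⟨by linarith, fun μ₁ => by linarith⟩
end

section
/- Suppose m is differentiable with derivative m′(y) < 1 for all y ∈ ℝ (Stationarity), and ν₁((−∞, y]) ≤ ν₀((−∞, y]) for all y ∈ ℝ (Stochastic Monotonicity, version (b)). If μ₁ ≥ 0 (the mean treated outcome E(Y_{t+1} | G = 1)) and μ_LDV > 0, then the ratio estimands γ_DID := μ₁ / μ_DID and γ_LDV := μ₁ / μ_LDV satisfy γ_DID ≤ γ_LDV. -/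
/-!
Stationarity makes `Δ = m - id` strictly decreasing, and `μ_DID - μ_LDV = ∫ Δ dν₀ - ∫ Δ dν₁`.
Stochastic monotonicity lowers the mean of every decreasing function: by the layer cake
formula its mean is an integral of the masses of its superlevel sets, which are lower sets,
and lower sets of `ℝ` have smaller `ν₁`-mass. Hence `0 < μ_LDV ≤ μ_DID`, and dividing
`μ₁ ≥ 0` by the larger denominator gives the smaller ratio.
-/

open MeasureTheory Set

theorem IsLowerSet.measure_le_of_measure_Iic_le {ν₀ ν₁ : Measure ℝ}
    (hmono : ∀ y, ν₁ (Iic y) ≤ ν₀ (Iic y)) {S : Set ℝ} (hS : IsLowerSet S) :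
    ν₁ S ≤ ν₀ S := by
  by_cases hmax : ∃ a, IsGreatest S a
  · obtain ⟨a, haS, ha⟩ := hmax
    rw [(hS.Iic_subset haS).antisymm' ha]
    exact hmono a
  -- Without a greatest element, `S` is the directed union of the `Iic q`, `q ∈ S` rational.
  have hunion : S = ⋃ q : {q : ℚ // (q : ℝ) ∈ S}, Iic (q : ℝ) := by
    refine (Set.iUnion_subset fun q => hS.Iic_subset q.2).antisymm' fun x hx => ?_
    obtain ⟨y, hyS, hxy⟩ : ∃ y ∈ S, x < y := by
      simpa [IsGreatest, upperBounds, hx] using not_exists.mp hmax x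
    obtain ⟨q, hxq, hqy⟩ := exists_rat_btwn hxy
    exact mem_iUnion.mpr ⟨⟨q, hS hqy.le hyS⟩, hxq.le⟩
  have hdir : Directed (· ⊆ ·) fun q : {q : ℚ // (q : ℝ) ∈ S} => Iic (q : ℝ) :=
    Monotone.directed_le fun p q hpq => Iic_subset_Iic.mpr (by exact_mod_cast hpq)
  rw [hunion, hdir.measure_iUnion, hdir.measure_iUnion]
  exact iSup_mono fun q => hmono q

theorem IsUpperSet.measure_le_of_measure_Iic_le {ν₀ ν₁ : Measure ℝ}
    [IsProbabilityMeasure ν₀] [IsProbabilityMeasure ν₁]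
    (hmono : ∀ y, ν₁ (Iic y) ≤ ν₀ (Iic y)) {S : Set ℝ} (hS : IsUpperSet S)
    (hSm : MeasurableSet S) : ν₀ S ≤ ν₁ S := by
  have hcompl := hS.compl.measure_le_of_measure_Iic_le hmono
  rw [prob_compl_eq_one_sub hSm, prob_compl_eq_one_sub hSm] at hcompl
  exact (ENNReal.sub_le_sub_iff_left prob_le_one ENNReal.one_ne_top).mp hcompl

theorem integral_le_integral_of_measure_lt_le {α : Type*} [MeasurableSpace α]
    {μ ν : Measure α} {f : α → ℝ} (hf : 0 ≤ f) (hfm : Measurable f) (hfν : Integrable f ν)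
    (hμν : ∀ t, μ {x | t < f x} ≤ ν {x | t < f x}) :
    ∫ x, f x ∂μ ≤ ∫ x, f x ∂ν := by
  have hlintegral : ∫⁻ x, ENNReal.ofReal (f x) ∂μ ≤ ∫⁻ x, ENNReal.ofReal (f x) ∂ν := by
    rw [lintegral_eq_lintegral_meas_lt μ (.of_forall hf) hfm.aemeasurable,
      lintegral_eq_lintegral_meas_lt ν (.of_forall hf) hfm.aemeasurable]
    exact lintegral_mono hμν
  rw [integral_eq_lintegral_of_nonneg_ae (.of_forall hf) hfm.aestronglyMeasurable,
    integral_eq_lintegral_of_nonneg_ae (.of_forall hf) hfm.aestronglyMeasurable]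
  exact ENNReal.toReal_mono hfν.lintegral_lt_top.ne hlintegral

theorem Antitone.integral_le_integral_of_measure_Iic_le {ν₀ ν₁ : Measure ℝ}
    [IsProbabilityMeasure ν₀] [IsProbabilityMeasure ν₁]
    (hmono : ∀ y, ν₁ (Iic y) ≤ ν₀ (Iic y)) {f : ℝ → ℝ} (hf : Antitone f)
    (hf₀ : Integrable f ν₀) (hf₁ : Integrable f ν₁) :
    ∫ y, f y ∂ν₁ ≤ ∫ y, f y ∂ν₀ := by
  have hpos : ∫ y, max (f y) 0 ∂ν₁ ≤ ∫ y, max (f y) 0 ∂ν₀ :=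
    integral_le_integral_of_measure_lt_le (fun _ => le_max_right _ _)
      (hf.measurable.max measurable_const) hf₀.pos_part fun t =>
        IsLowerSet.measure_le_of_measure_Iic_le hmono
          fun _ _ hab ht => ht.trans_le (max_le_max (hf hab) le_rfl)
  have hneg : ∫ y, max (-f y) 0 ∂ν₀ ≤ ∫ y, max (-f y) 0 ∂ν₁ :=
    integral_le_integral_of_measure_lt_le (fun _ => le_max_right _ _)
      (hf.measurable.neg.max measurable_const) hf₁.neg_part fun t =>
        IsUpperSet.measure_le_of_measure_Iic_le hmono
          (fun _ _ hab ht => ht.trans_le (max_le_max (neg_le_neg (hf hab)) le_rfl))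
          (measurableSet_lt measurable_const (hf.measurable.neg.max measurable_const))
  rw [integral_eq_integral_pos_part_sub_integral_neg_part hf₀,
    integral_eq_integral_pos_part_sub_integral_neg_part hf₁]
  simp only [Real.coe_toNNReal']
  linarith

theorem strictAnti_sub_id_of_deriv_lt_one {m : ℝ → ℝ} (hm : Differentiable ℝ m)
    (hderiv : ∀ y, deriv m y < 1) : StrictAnti fun y => m y - y :=
  strictAnti_of_deriv_neg fun y => by
    rw [deriv_fun_sub (hm y) differentiableAt_fun_id, deriv_id'', sub_neg]
    exact hderiv y

/-- Theorem 1, ratio version, case (b): under Stationarity and Stochastic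
Monotonicity (b), if `μ₁ ≥ 0` and `μ_LDV > 0` then `γ_DID = μ₁/μ_DID ≤ μ₁/μ_LDV = γ_LDV`. -/
theorem bracketing_ratio_b (ν₀ ν₁ : Measure ℝ)
    [IsProbabilityMeasure ν₀] [IsProbabilityMeasure ν₁]
    (m : ℝ → ℝ) (hdiff : Differentiable ℝ m) (hderiv : ∀ y : ℝ, deriv m y < 1)
    (hid₀ : Integrable (fun y : ℝ => y) ν₀) (hid₁ : Integrable (fun y : ℝ => y) ν₁)
    (hm₀ : Integrable m ν₀) (hm₁ : Integrable m ν₁)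
    (hmono : ∀ y : ℝ, ν₁ (Set.Iic y) ≤ ν₀ (Set.Iic y))
    (μDID μLDV : ℝ)
    (hDID : μDID = (∫ y, y ∂ν₁) + (∫ y, m y ∂ν₀) - (∫ y, y ∂ν₀))
    (hLDV : μLDV = ∫ y, m y ∂ν₁)
    (μ₁ : ℝ) (hμ₁ : 0 ≤ μ₁) (hpos : 0 < μLDV) :
    μ₁ / μDID ≤ μ₁ / μLDV := by
  have hΔ : ∫ y, (m y - y) ∂ν₁ ≤ ∫ y, (m y - y) ∂ν₀ :=
    (strictAnti_sub_id_of_deriv_lt_one hdiff hderiv).antitone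
      |>.integral_le_integral_of_measure_Iic_le hmono (hm₀.sub hid₀) (hm₁.sub hid₁)
  rw [integral_sub hm₁ hid₁, integral_sub hm₀ hid₀] at hΔ
  have hLDV_le_DID : μLDV ≤ μDID := by
    rw [hDID, hLDV]
    linarith
  exact div_le_div_of_nonneg_left hμ₁ hpos hLDV_le_DID
end

section
/- Let p₀, p₁ ∈ [0,1] and m₀, m₁ ∈ [0,1], and define μ_DID := (1 − p₁) + [p₀·m₀ + (1 − p₀)·m₁] − (1 − p₀) and μ_LDV := p₁·m₀ + (1 − p₁)·m₁. If p₁ ≥ p₀, then μ_DID ≤ μ_LDV; consequently, for any real number μ₁, the estimands τ_DID := μ₁ − μ_DID and τ_LDV := μ₁ − μ_LDV satisfy τ_DID ≥ τ_LDV. (In particular, for a binary outcome the stationarity condition holds automatically and the bracketing direction is determined by the sign of pr(Y_t = 0 | G = 1) − pr(Y_t = 0 | G = 0).) -/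
/-! μ_LDV − μ_DID factors as (p₁ − p₀)(1 − (m₁ − m₀)); the first factor is nonnegative by
assumption and the second because the conditional means lie in [0, 1]. -/

def didMean (p₀ p₁ m₀ m₁ : ℝ) : ℝ := (1 - p₁) + (p₀ * m₀ + (1 - p₀) * m₁) - (1 - p₀)

def ldvMean (p₁ m₀ m₁ : ℝ) : ℝ := p₁ * m₀ + (1 - p₁) * m₁

theorem ldvMean_sub_didMean (p₀ p₁ m₀ m₁ : ℝ) :
    ldvMean p₁ m₀ m₁ - didMean p₀ p₁ m₀ m₁ = (p₁ - p₀) * (1 - (m₁ - m₀)) := by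
  unfold ldvMean didMean
  ring

theorem didMean_le_ldvMean {p₀ p₁ m₀ m₁ : ℝ} (hp : p₀ ≤ p₁) (hm : m₁ - m₀ ≤ 1) :
    didMean p₀ p₁ m₀ m₁ ≤ ldvMean p₁ m₀ m₁ := by
  have h := mul_nonneg (sub_nonneg.2 hp) (sub_nonneg.2 hm)
  rw [← ldvMean_sub_didMean] at h
  linarith

theorem bracketing_binary_general (p₀ p₁ m₀ m₁ : ℝ)
    (hm₀ : m₀ ∈ Set.Icc (0 : ℝ) 1) (hm₁ : m₁ ∈ Set.Icc (0 : ℝ) 1)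
    (μDID μLDV : ℝ)
    (hDID : μDID = (1 - p₁) + (p₀ * m₀ + (1 - p₀) * m₁) - (1 - p₀))
    (hLDV : μLDV = p₁ * m₀ + (1 - p₁) * m₁)
    (hmono : p₀ ≤ p₁) :
    μDID ≤ μLDV ∧ ∀ μ₁ : ℝ, μ₁ - μDID ≥ μ₁ - μLDV := by
  have hle : μDID ≤ μLDV :=
    hDID ▸ hLDV ▸ didMean_le_ldvMean hmono (by linarith [hm₀.1, hm₁.2])
  exact ⟨hle, fun μ₁ => sub_le_sub_left hle μ₁⟩

/-- Binary-outcome specialization of the bracketing theorem: with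
`μ_DID = (1 − p₁) + (p₀ m₀ + (1 − p₀) m₁) − (1 − p₀)` and
`μ_LDV = p₁ m₀ + (1 − p₁) m₁`, if `p₁ ≥ p₀` then `μ_DID ≤ μ_LDV`, and hence
`τ_DID = μ₁ − μ_DID ≥ μ₁ − μ_LDV = τ_LDV` for every `μ₁`. -/
theorem bracketing_binary (p₀ p₁ m₀ m₁ : ℝ)
    (hp₀ : p₀ ∈ Set.Icc (0 : ℝ) 1) (hp₁ : p₁ ∈ Set.Icc (0 : ℝ) 1)
    (hm₀ : m₀ ∈ Set.Icc (0 : ℝ) 1) (hm₁ : m₁ ∈ Set.Icc (0 : ℝ) 1)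
    (μDID μLDV : ℝ)
    (hDID : μDID = (1 - p₁) + (p₀ * m₀ + (1 - p₀) * m₁) - (1 - p₀))
    (hLDV : μLDV = p₁ * m₀ + (1 - p₁) * m₁)
    (hmono : p₀ ≤ p₁) :
    μDID ≤ μLDV ∧ ∀ μ₁ : ℝ, μ₁ - μDID ≥ μ₁ - μLDV :=
  bracketing_binary_general p₀ p₁ m₀ m₁ hm₀ hm₁ μDID μLDV hDID hLDV hmono
end

section
/- Let ν₀ and ν₁ be probability measures on ℕ and m : ℕ → ℝ a function satisfying m(k+1) − m(k) < 1 for every k ∈ ℕ (the discrete stationarity condition). Assume the identity function k ↦ k and m are integrable with respect to both ν₀ and ν₁, and that ν₁({0, 1, …, k}) ≥ ν₀({0, 1, …, k}) for every k ∈ ℕ. Then μ_DID := ∫ k ν₁(dk) + ∫ m(k) ν₀(dk) − ∫ k ν₀(dk) and μ_LDV := ∫ m(k) ν₁(dk) satisfy μ_DID ≤ μ_LDV. -/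
/-!
With `g k = m k - k`, the stationarity condition says exactly that `g` is antitone, and
`μ_LDV - μ_DID = ∫ g dν₁ - ∫ g dν₀`. Truncating `g` at `N` and summing by parts writes
`∫ g (min k N) dν` as `g N` plus a combination of the CDF values `ν {0,…,j}` with nonnegative
weights `g j - g (j+1)`, so the truncated integrals are ordered as the CDFs are; dominated
convergence lets `N → ∞`.
-/

open MeasureTheory

theorem comp_min_eq_add_sum_indicator (g : ℕ → ℝ) (k N : ℕ) :
    g (min k N) =
      g N + ∑ j ∈ Finset.range N, (Set.Iic j).indicator (fun _ => g j - g (j + 1)) k := by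
  induction N with
  | zero => simp
  | succ N ih =>
    rw [Finset.sum_range_succ]
    rcases le_or_gt k N with hk | hk
    · rw [Set.indicator_of_mem (Set.mem_Iic.mpr hk), min_eq_left (by omega)]
      rw [min_eq_left hk] at ih
      linarith
    · rw [Set.indicator_of_notMem (by simpa using hk), min_eq_right (by omega)]
      rw [min_eq_right hk.le] at ih
      linarith

theorem integral_comp_min_eq (ν : Measure ℕ) [IsFiniteMeasure ν] (g : ℕ → ℝ) (N : ℕ) :
    ∫ k, g (min k N) ∂ν =
      ν.real Set.univ * g N + ∑ j ∈ Finset.range N, ν.real (Set.Iic j) * (g j - g (j + 1)) := by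
  have hind : ∀ j, Integrable ((Set.Iic j).indicator fun _ => g j - g (j + 1)) ν :=
    fun j => (integrable_const _).indicator measurableSet_Iic
  simp_rw [comp_min_eq_add_sum_indicator g _ N]
  rw [integral_add (integrable_const _) (integrable_finsetSum _ fun j _ => hind j),
    integral_const, integral_finsetSum _ fun j _ => hind j]
  simp only [integral_indicator_const _ measurableSet_Iic, smul_eq_mul]

theorem tendsto_integral_comp_min (ν : Measure ℕ) [IsFiniteMeasure ν] {g : ℕ → ℝ}
    (hg : Antitone g) (hint : Integrable g ν) :
    Filter.Tendsto (fun N => ∫ k, g (min k N) ∂ν) Filter.atTop (nhds (∫ k, g k ∂ν)) := by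
  refine tendsto_integral_of_dominated_convergence (fun k => |g 0| + |g k|)
    (fun N => measurable_from_nat.aestronglyMeasurable) ((integrable_const _).add hint.abs)
    (fun N => Filter.Eventually.of_forall fun k => ?_) (Filter.Eventually.of_forall fun k => ?_)
  · have hle : g (min k N) ≤ g 0 := hg (Nat.zero_le _)
    have hge : g k ≤ g (min k N) := hg (min_le_left k N)
    rw [Real.norm_eq_abs, abs_le]
    constructor <;>
      linarith [neg_abs_le (g k), le_abs_self (g 0), abs_nonneg (g 0), abs_nonneg (g k)]
  · exact tendsto_const_nhds.congr' <| (Filter.eventually_ge_atTop k).mono fun N hN => by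
      simp [min_eq_left hN]

theorem integral_le_integral_of_antitone_of_measure_Iic_le (ν₀ ν₁ : Measure ℕ)
    [IsProbabilityMeasure ν₀] [IsProbabilityMeasure ν₁] {g : ℕ → ℝ} (hg : Antitone g)
    (hg₀ : Integrable g ν₀) (hg₁ : Integrable g ν₁)
    (hle : ∀ k, ν₀ (Set.Iic k) ≤ ν₁ (Set.Iic k)) :
    ∫ k, g k ∂ν₀ ≤ ∫ k, g k ∂ν₁ := by
  refine le_of_tendsto_of_tendsto' (tendsto_integral_comp_min ν₀ hg hg₀)
    (tendsto_integral_comp_min ν₁ hg hg₁) fun N => ?_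
  simp only [integral_comp_min_eq, probReal_univ]
  gcongr with j
  · exact sub_nonneg.mpr (hg j.le_succ)
  · exact ENNReal.toReal_mono (measure_ne_top _ _) (hle j)

/-- Count-outcome form of the bracketing theorem: for probability measures on `ℕ`
with `m(k+1) − m(k) < 1` (discrete stationarity) and `ν₁({0,…,k}) ≥ ν₀({0,…,k})`
for every `k` (stochastic monotonicity), we have `μ_DID ≤ μ_LDV`. -/
theorem bracketing_count (ν₀ ν₁ : Measure ℕ)
    [IsProbabilityMeasure ν₀] [IsProbabilityMeasure ν₁]
    (m : ℕ → ℝ) (hstat : ∀ k : ℕ, m (k + 1) - m k < 1)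
    (hid₀ : Integrable (fun k : ℕ => (k : ℝ)) ν₀)
    (hid₁ : Integrable (fun k : ℕ => (k : ℝ)) ν₁)
    (hm₀ : Integrable m ν₀) (hm₁ : Integrable m ν₁)
    (hmono : ∀ k : ℕ, ν₀ (Set.Iic k) ≤ ν₁ (Set.Iic k))
    (μDID μLDV : ℝ)
    (hDID : μDID = (∫ k, (k : ℝ) ∂ν₁) + (∫ k, m k ∂ν₀) - (∫ k, (k : ℝ) ∂ν₀))
    (hLDV : μLDV = ∫ k, m k ∂ν₁) :
    μDID ≤ μLDV := by
  have hanti : Antitone fun k : ℕ => m k - k :=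
    antitone_nat_of_succ_le fun k => by push_cast; linarith [hstat k]
  have hle := integral_le_integral_of_antitone_of_measure_Iic_le ν₀ ν₁ hanti
    (hm₀.sub hid₀) (hm₁.sub hid₁) hmono
  rw [integral_sub hm₀ hid₀, integral_sub hm₁ hid₁] at hle
  rw [hDID, hLDV]
  linarith
end

section
/- Let (Ω, ℱ, μ) be a probability space, A ∈ ℱ with 0 < μ(A) < 1, 𝒢 ⊆ ℱ a sub-σ-algebra (generated by the lagged outcome Y_t), and let Y_{t+1}, Y⁰ : Ω → ℝ be integrable random variables with Y_{t+1}(ω) = Y⁰(ω) for all ω ∈ Aᶜ. Assume mean ignorability: the conditional expectation of Y⁰ given the σ-algebra 𝒢 ⊔ σ({A}) equals the conditional expectation of Y⁰ given 𝒢, μ-almost everywhere; and overlap: μ[1_{Aᶜ} | 𝒢] > 0 μ-almost everywhere. Then E[1_A · Y⁰] = E[ 1_A · ( μ[1_{Aᶜ} · Y_{t+1} | 𝒢] / μ[1_{Aᶜ} | 𝒢] ) ]; dividing both sides by μ(A), this says the counterfactual mean μ₀ = E{Y_{t+1}(0) | G = 1} equals E{ E(Y_{t+1} | G = 0, Y_t)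 | G = 1 }, the lagged-dependent-variable identification formula. -/
/-!
Put `𝒢' = 𝒢 ⊔ σ(A)`. Since `A` is `𝒢'`-measurable, `∫_A Y⁰ = ∫_A μ[Y⁰ | 𝒢']`, which is
`∫_A μ[Y⁰ | 𝒢]` by ignorability. On the other hand, conditioning first on `𝒢'` and then on `𝒢`,
`μ[1_{Aᶜ} Y⁰ | 𝒢] = μ[1_{Aᶜ} μ[Y⁰ | 𝒢'] | 𝒢] = μ[Y⁰ | 𝒢] · μ[1_{Aᶜ} | 𝒢]`, and `Yₜ₊₁ = Y⁰` on `Aᶜ`;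
so by overlap the ratio in the theorem is `μ[Y⁰ | 𝒢]` almost everywhere.
-/

open MeasureTheory

namespace MeasureTheory

variable {Ω : Type*} {m m' m0 : MeasurableSpace Ω} {μ : Measure Ω} [IsFiniteMeasure μ]
  {s : Set Ω} {f : Ω → ℝ}

theorem setIntegral_condExp_of_condExp_ae_eq (hm' : m' ≤ m0) (hs : MeasurableSet[m'] s)
    (hf : Integrable f μ) (hig : μ[f | m'] =ᵐ[μ] μ[f | m]) :
    ∫ ω in s, μ[f | m] ω ∂μ = ∫ ω in s, f ω ∂μ := by
  rw [← setIntegral_condExp hm' hf hs]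
  exact integral_congr_ae (ae_restrict_of_ae hig.symm)

theorem condExp_indicator_ae_eq_mul_of_condExp_ae_eq (hm : m ≤ m') (hm' : m' ≤ m0)
    (hs : MeasurableSet[m'] s) (hf : Integrable f μ) (hig : μ[f | m'] =ᵐ[μ] μ[f | m]) :
    μ[s.indicator f | m] =ᵐ[μ] μ[f | m] * μ[s.indicator (fun _ => (1 : ℝ)) | m] := by
  have hs0 : MeasurableSet s := hm' s hs
  have hpull : μ[s.indicator f | m'] =ᵐ[μ] μ[f | m] * s.indicator (fun _ => (1 : ℝ)) := by
    filter_upwards [condExp_indicator hf hs, hig] with ω hind hω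
    rw [hind]
    by_cases hωs : ω ∈ s <;> simp [hωs, hω]
  calc μ[s.indicator f | m]
      =ᵐ[μ] μ[μ[s.indicator f | m'] | m] := (condExp_condExp_of_le hm hm').symm
    _ =ᵐ[μ] μ[μ[f | m] * s.indicator (fun _ => (1 : ℝ)) | m] := condExp_congr_ae hpull
    _ =ᵐ[μ] μ[f | m] * μ[s.indicator (fun _ => (1 : ℝ)) | m] :=
      condExp_mul_of_stronglyMeasurable_left stronglyMeasurable_condExp
        (integrable_condExp.mul_bdd (c := 1) (aestronglyMeasurable_const.indicator hs0)
          (ae_of_all _ fun _ => (norm_indicator_le_norm_self _ _).trans norm_one.le))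
        ((integrable_const 1).indicator hs0)

end MeasureTheory

theorem ldv_identification_general {Ω : Type*} [m0 : MeasurableSpace Ω] (μ : Measure Ω)
    [IsProbabilityMeasure μ] (A : Set Ω) (hA : MeasurableSet A)
    (G : MeasurableSpace Ω) (hG : G ≤ m0)
    (Yt1 Y0 : Ω → ℝ) (hY0 : Integrable Y0 μ)
    (hcons : ∀ ω ∈ Aᶜ, Yt1 ω = Y0 ω)
    (hig : μ[Y0 | G ⊔ MeasurableSpace.generateFrom {A}] =ᵐ[μ] μ[Y0 | G])
    (hoverlap : ∀ᵐ ω ∂μ, 0 < (μ[Aᶜ.indicator (fun _ => (1 : ℝ)) | G]) ω) :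
    ∫ ω, A.indicator Y0 ω ∂μ =
      ∫ ω, A.indicator (fun ω' =>
        (μ[Aᶜ.indicator Yt1 | G]) ω' / (μ[Aᶜ.indicator (fun _ => (1 : ℝ)) | G]) ω') ω ∂μ := by
  have hm' : G ⊔ MeasurableSpace.generateFrom {A} ≤ m0 :=
    sup_le hG (MeasurableSpace.generateFrom_le (by rintro s rfl; exact hA))
  have hAm' : MeasurableSet[G ⊔ MeasurableSpace.generateFrom {A}] A :=
    le_sup_right (a := G) _ (MeasurableSpace.measurableSet_generateFrom rfl)
  have hratio : (fun ω => μ[Aᶜ.indicator Yt1 | G] ω / μ[Aᶜ.indicator (fun _ => (1 : ℝ)) | G] ω)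
      =ᵐ[μ] μ[Y0 | G] := by
    rw [Set.indicator_congr hcons]
    filter_upwards [condExp_indicator_ae_eq_mul_of_condExp_ae_eq le_sup_left hm' hAm'.compl hY0 hig,
      hoverlap] with ω hmul hpos
    rw [hmul, Pi.mul_apply, mul_div_cancel_right₀ _ hpos.ne']
  rw [integral_indicator hA, integral_indicator hA,
    ← setIntegral_condExp_of_condExp_ae_eq hm' hAm' hY0 hig]
  exact integral_congr_ae (ae_restrict_of_ae hratio.symm)

/-- Identification of the counterfactual mean under ignorability: if `Yₜ₊₁ = Y⁰` on
the control group `Aᶜ`, mean ignorability `μ[Y⁰ | 𝒢 ⊔ σ(A)] =ᵐ μ[Y⁰ | 𝒢]` holds and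
overlap `μ[1_{Aᶜ} | 𝒢] > 0` a.e. holds, then
`E[1_A · Y⁰] = E[1_A · (μ[1_{Aᶜ}·Yₜ₊₁ | 𝒢] / μ[1_{Aᶜ} | 𝒢])]`. -/
theorem ldv_identification {Ω : Type*} [m0 : MeasurableSpace Ω] (μ : Measure Ω)
    [IsProbabilityMeasure μ] (A : Set Ω) (hA : MeasurableSet A)
    (hA0 : 0 < μ A) (hA1 : μ A < 1)
    (G : MeasurableSpace Ω) (hG : G ≤ m0)
    (Yt1 Y0 : Ω → ℝ) (hYt1 : Integrable Yt1 μ) (hY0 : Integrable Y0 μ)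
    (hcons : ∀ ω ∈ Aᶜ, Yt1 ω = Y0 ω)
    (hig : μ[Y0 | G ⊔ MeasurableSpace.generateFrom {A}] =ᵐ[μ] μ[Y0 | G])
    (hoverlap : ∀ᵐ ω ∂μ, 0 < (μ[Aᶜ.indicator (fun _ => (1 : ℝ)) | G]) ω) :
    ∫ ω, A.indicator Y0 ω ∂μ =
      ∫ ω, A.indicator (fun ω' =>
        (μ[Aᶜ.indicator Yt1 | G]) ω' / (μ[Aᶜ.indicator (fun _ => (1 : ℝ)) | G]) ω') ω ∂μ :=
  ldv_identification_general (m0 := m0) μ A hA G hG Yt1 Y0 hY0 hcons hig hoverlap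
end
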